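/- If the gradient of F is L-Lipschitz along the segment from b to x, then the error of the m-step right Riemann approximation of the integrated gradient of coordinate j is bounded: |ĨG_j^m(x, b) − IG_j(x, b)| ≤ |x_j − b_j| · L · ‖x − b‖ / (2m). -/

import Mathlib

/-!
On a cell `[u, v]` the right-endpoint rule errs by `∫ (g v - g α) dα`, which a `K`-Lipschitz
`g` bounds by `K ∫ (v - α) dα = K (v - u)² / 2`. Summing over the `m` cells of width
`(b - a) / m` gives `K (b - a)² / (2m)`; the factor `x_j - b_j` then just scales the error.
-/

open MeasureTheory Set
open scoped NNReal

noncomputable def rightRiemannSum (g : ℝ → ℝ) (a b : ℝ) (m : ℕ) : ℝ :=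
  (b - a) / m * ∑ k ∈ Finset.Icc 1 m, g (a + k * ((b - a) / m))

namespace LipschitzOnWith

variable {g : ℝ → ℝ} {K : ℝ≥0}

theorem abs_mul_sub_integral_le {u v : ℝ} (huv : u ≤ v) (hg : LipschitzOnWith K g (Icc u v)) :
    |(v - u) * g v - ∫ α in u..v, g α| ≤ K * (v - u) ^ 2 / 2 := by
  have hint : IntervalIntegrable g volume u v := hg.continuousOn.intervalIntegrable_of_Icc huv
  have hpointwise : ∀ α ∈ Icc u v, |g v - g α| ≤ K * (v - α) := fun α hα => by
    simpa only [Real.dist_eq, abs_of_nonneg (sub_nonneg.2 hα.2)] using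
      hg.dist_le_mul v ⟨huv, le_rfl⟩ α hα
  calc |(v - u) * g v - ∫ α in u..v, g α|
      = |∫ α in u..v, (g v - g α)| := by
        rw [intervalIntegral.integral_sub intervalIntegrable_const hint,
          intervalIntegral.integral_const, smul_eq_mul]
    _ ≤ ∫ α in u..v, |g v - g α| := intervalIntegral.abs_integral_le_integral_abs huv
    _ ≤ ∫ α in u..v, K * (v - α) :=
        intervalIntegral.integral_mono_on huv
          ((continuousOn_const.sub hg.continuousOn).abs.intervalIntegrable_of_Icc huv)
          ((by fun_prop : Continuous fun α : ℝ => K * (v - α)).intervalIntegrable u v)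
          hpointwise
    _ = K * (v - u) ^ 2 / 2 := by
        rw [intervalIntegral.integral_const_mul,
          intervalIntegral.integral_comp_sub_left fun α => α, integral_id]
        ring

theorem abs_rightRiemannSum_sub_integral_le {a b : ℝ} (hab : a ≤ b) {m : ℕ} (hm : 0 < m)
    (hg : LipschitzOnWith K g (Icc a b)) :
    |rightRiemannSum g a b m - ∫ α in a..b, g α| ≤ K * (b - a) ^ 2 / (2 * m) := by
  have hm' : (0 : ℝ) < m := Nat.cast_pos.2 hm
  set h := (b - a) / m with h_def
  set t : ℕ → ℝ := fun k => a + k * h with t_def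
  have hh : 0 ≤ h := div_nonneg (sub_nonneg.2 hab) hm'.le
  have ht_step : ∀ k, t (k + 1) - t k = h := fun k => by simp only [t_def]; push_cast; ring
  have ht_start : t 0 = a := by simp [t_def]
  have ht_end : t m = b := by simp only [t_def, h_def]; field_simp; ring
  have ht_mem : ∀ k ≤ m, t k ∈ Icc a b := fun k hk =>
    ⟨le_add_of_nonneg_right (mul_nonneg k.cast_nonneg hh),
      ht_end ▸ show t k ≤ t m by simp only [t_def]; gcongr⟩
  have hcell : ∀ k < m, Icc (t k) (t (k + 1)) ⊆ Icc a b := fun k hk =>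
    Icc_subset_Icc (ht_mem k hk.le).1 (ht_mem (k + 1) hk).2
  have hsplit : rightRiemannSum g a b m - ∫ α in a..b, g α
      = ∑ k ∈ Finset.range m, (h * g (t (k + 1)) - ∫ α in t k..t (k + 1), g α) := by
    have hint : ∀ k < m, IntervalIntegrable g volume (t k) (t (k + 1)) := fun k hk =>
      (hg.mono (hcell k hk)).continuousOn.intervalIntegrable_of_Icc (by linarith [ht_step k])
    rw [Finset.sum_sub_distrib, intervalIntegral.sum_integral_adjacent_intervals hint,
      ← Finset.mul_sum, ht_start, ht_end, rightRiemannSum, Finset.range_eq_Ico,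
      Finset.sum_Ico_add' (fun k => g (t k)) 0 m 1]
    rfl
  calc |rightRiemannSum g a b m - ∫ α in a..b, g α|
      ≤ ∑ k ∈ Finset.range m, |h * g (t (k + 1)) - ∫ α in t k..t (k + 1), g α| :=
        hsplit ▸ Finset.abs_sum_le_sum_abs _ _
    _ ≤ ∑ _k ∈ Finset.range m, K * h ^ 2 / 2 := Finset.sum_le_sum fun k hk => by
        have hk := Finset.mem_range.1 hk
        simpa only [ht_step] using
          (hg.mono (hcell k hk)).abs_mul_sub_integral_le (by linarith [ht_step k])
    _ = K * (b - a) ^ 2 / (2 * m) := by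
        rw [Finset.sum_const, Finset.card_range, nsmul_eq_mul, h_def]
        field_simp

end LipschitzOnWith

theorem integratedGradients_riemann_error_general {d : ℕ}
    (x b : EuclideanSpace ℝ (Fin d)) (j : Fin d) (L : ℝ) (m : ℕ) (hm : 0 < m)
    (g : ℝ → ℝ)
    (hLip : ∀ α β : ℝ, α ∈ Set.Icc (0:ℝ) 1 → β ∈ Set.Icc (0:ℝ) 1 →
      |g α - g β| ≤ L * ‖x - b‖ * |α - β|) :
    |(x j - b j) * ((1 / (m : ℝ)) * ∑ k ∈ Finset.Icc 1 m, g ((k : ℝ) / (m : ℝ)))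
        - (x j - b j) * ∫ α in (0:ℝ)..1, g α|
      ≤ |x j - b j| * L * ‖x - b‖ / (2 * m) := by
  have hC : 0 ≤ L * ‖x - b‖ :=
    (abs_nonneg _).trans (by simpa using hLip 0 1 (by simp) (by simp))
  have hg : LipschitzOnWith (L * ‖x - b‖).toNNReal g (Icc 0 1) :=
    .of_dist_le' fun α hα β hβ => by simpa only [Real.dist_eq] using hLip α β hα hβ
  have hsum :
      rightRiemannSum g 0 1 m = (1 / (m : ℝ)) * ∑ k ∈ Finset.Icc 1 m, g ((k : ℝ) / m) := by
    simp [rightRiemannSum, div_eq_mul_inv]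
  have herror := hg.abs_rightRiemannSum_sub_integral_le zero_le_one hm
  rw [hsum, Real.coe_toNNReal _ hC] at herror
  rw [← mul_sub, abs_mul]
  calc _ ≤ |x j - b j| * (L * ‖x - b‖ * (1 - 0) ^ 2 / (2 * m)) := by gcongr
    _ = |x j - b j| * L * ‖x - b‖ / (2 * m) := by ring

/-- Error bound for the `m`-step right Riemann approximation of integrated
gradients when the relevant partial derivative is `L`-Lipschitz along the
segment from `b` to `x`. -/
theorem integratedGradients_riemann_error {d : ℕ}
    (F : EuclideanSpace ℝ (Fin d) → ℝ) (hF : ContDiff ℝ 1 F)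
    (x b : EuclideanSpace ℝ (Fin d)) (j : Fin d) (L : ℝ) (m : ℕ) (hm : 0 < m)
    (g : ℝ → ℝ)
    (hg : ∀ α : ℝ, g α = fderiv ℝ F (b + α • (x - b)) (EuclideanSpace.single j 1))
    (hLip : ∀ α β : ℝ, α ∈ Set.Icc (0:ℝ) 1 → β ∈ Set.Icc (0:ℝ) 1 →
      |g α - g β| ≤ L * ‖x - b‖ * |α - β|) :
    |(x j - b j) * ((1 / (m : ℝ)) * ∑ k ∈ Finset.Icc 1 m, g ((k : ℝ) / (m : ℝ)))
        - (x j - b j) * ∫ α in (0:ℝ)..1, g α|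
      ≤ |x j - b j| * L * ‖x - b‖ / (2 * m) :=
  integratedGradients_riemann_error_general x b j L m hm g hLip
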